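/- arXiv:math/0309194 — 2 statements merged into one kernel-verified Lean document; each statement's English description precedes it below -/
import Mathlib

section
/- With notation as above, if u ∼_L v for a positive length vector L, then p(u) − p(v) lies in the sum of the generalized eigenspaces of A_φ for eigenvalues other than the Perron-Frobenius eigenvalue λ (equivalently, p(u) − p(v) is orthogonal to the left Perron-Frobenius eigenvector L_λ). Conversely, if L = L_λ, then L_λ · (p(u) − p(v)) = 0 implies u ∼_{L_λ} v. -/
open Matrix Polynomial

lemma aux_vecMul_pow {n : ℕ} {R : Type*} [CommRing R] (A : Matrix (Fin n) (Fin n) R)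
    (lam : R) (L : Fin n → R) (h : vecMul L A = lam • L) (k : ℕ) :
    vecMul L (A ^ k) = lam ^ k • L := by
  induction k with
  | zero => simp [vecMul_one]
  | succ k ih =>
    rw [pow_succ, ← vecMul_vecMul, ih]
    simp [vecMul_smul, Matrix.smul_vecMul, h, pow_succ, smul_smul, mul_comm]

lemma aux_mulVec_pow {n : ℕ} {R : Type*} [CommRing R] (A : Matrix (Fin n) (Fin n) R)
    (lam : R) (y : Fin n → R) (h : A *ᵥ y = lam • y) (k : ℕ) :
    (A ^ k) *ᵥ y = lam ^ k • y := by
  induction k with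
  | zero => simp [one_mulVec]
  | succ k ih =>
    rw [pow_succ', ← mulVec_mulVec, ih, mulVec_smul, h, smul_smul, pow_succ']
    ring_nf

lemma aux_pow_nonneg {n : ℕ} (A : Matrix (Fin n) (Fin n) ℝ)
    (hA : ∀ i j, 0 ≤ A i j) (k : ℕ) : ∀ i j, 0 ≤ (A ^ k) i j := by
  induction k with
  | zero => intro i j; rcases eq_or_ne i j with h | h <;> simp [Matrix.one_apply, h]
  | succ k ih =>
    intro i j
    rw [pow_succ, Matrix.mul_apply]
    exact Finset.sum_nonneg fun t _ => mul_nonneg (ih i t) (hA t j)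

-- entry bound: Llam i * (A^k) i j ≤ lam^k * Llam j
lemma aux_entry_bound {n : ℕ} (A : Matrix (Fin n) (Fin n) ℝ)
    (hA : ∀ i j, 0 ≤ A i j) (lam : ℝ) (Llam : Fin n → ℝ) (hpos : ∀ i, 0 < Llam i)
    (heig : vecMul Llam A = lam • Llam) (k : ℕ) (i j : Fin n) :
    Llam i * (A ^ k) i j ≤ lam ^ k * Llam j := by
  have h1 := congrFun (aux_vecMul_pow A lam Llam heig k) j
  simp only [vecMul, dotProduct, Pi.smul_apply, smul_eq_mul] at h1
  rw [← h1]
  exact Finset.single_le_sum (f := fun t => Llam t * (A ^ k) t j)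
    (fun t _ => mul_nonneg (hpos t).le (aux_pow_nonneg A hA k t j)) (Finset.mem_univ i)

-- bound on |(B^k *ᵥ v) i| for complexified matrix
lemma aux_complex_bound {n : ℕ} (A : Matrix (Fin n) (Fin n) ℝ)
    (hA : ∀ i j, 0 ≤ A i j) (lam : ℝ) (Llam : Fin n → ℝ) (hpos : ∀ i, 0 < Llam i)
    (heig : vecMul Llam A = lam • Llam) (v : Fin n → ℂ) (k : ℕ) (i : Fin n) :
    ‖(((A ^ k).map Complex.ofReal) *ᵥ v) i‖
      ≤ lam ^ k * ((Llam i)⁻¹ * ∑ j, Llam j * ‖v j‖) := by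
  have h0 : (((A ^ k).map Complex.ofReal) *ᵥ v) i = ∑ j, ((A ^ k) i j : ℂ) * v j := by
    simp [mulVec, dotProduct, Matrix.map_apply]
  rw [h0]
  calc ‖∑ j, ((A ^ k) i j : ℂ) * v j‖
      ≤ ∑ j, ‖((A ^ k) i j : ℂ) * v j‖ := by
        exact norm_sum_le _ _
    _ = ∑ j, (A ^ k) i j * ‖v j‖ := by
        apply Finset.sum_congr rfl; intro j _
        rw [norm_mul, Complex.norm_real, Real.norm_eq_abs, abs_of_nonneg (aux_pow_nonneg A hA k i j)]
    _ ≤ ∑ j, (lam ^ k * (Llam j / Llam i)) * ‖v j‖ := by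
        apply Finset.sum_le_sum; intro j _
        apply mul_le_mul_of_nonneg_right _ (norm_nonneg _)
        have := aux_entry_bound A hA lam Llam hpos heig k i j
        rw [div_eq_mul_inv, ← mul_assoc]
        calc (A ^ k) i j = (Llam i * (A ^ k) i j) * (Llam i)⁻¹ := by
              rw [mul_comm (Llam i), mul_assoc, mul_inv_cancel₀ (hpos i).ne', mul_one]
          _ ≤ (lam ^ k * Llam j) * (Llam i)⁻¹ := by
              apply mul_le_mul_of_nonneg_right this (inv_nonneg.2 (hpos i).le)
    _ = lam ^ k * ((Llam i)⁻¹ * ∑ j, Llam j * ‖v j‖) := by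
        rw [Finset.mul_sum, Finset.mul_sum]
        apply Finset.sum_congr rfl; intro j _; field_simp

-- the Jordan growth formula
lemma aux_jordan_formula {n : ℕ} (B : Matrix (Fin n) (Fin n) ℂ) (lamc : ℂ)
    (v w : Fin n → ℂ) (hv : B *ᵥ v = lamc • v + w) (hw : B *ᵥ w = lamc • w) (k : ℕ) :
    (B ^ (k+1)) *ᵥ v = lamc ^ (k+1) • v + ((k+1 : ℕ) * lamc ^ k) • w := by
  induction k with
  | zero => simpa using hv
  | succ k ih =>
    rw [pow_succ', ← mulVec_mulVec, ih, mulVec_add, mulVec_smul, mulVec_smul, hv, hw]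
    push_cast
    ext i
    simp only [Pi.add_apply, Pi.smul_apply, smul_eq_mul]
    ring

-- no Jordan blocks at lam: from (B-lam)² v = 0 deduce (B-lam) v = 0
lemma aux_no_jordan {n : ℕ} (A : Matrix (Fin n) (Fin n) ℝ)
    (hA : ∀ i j, 0 ≤ A i j) (lam : ℝ) (hlam : 0 < lam)
    (Llam : Fin n → ℝ) (hpos : ∀ i, 0 < Llam i)
    (heig : vecMul Llam A = lam • Llam)
    (v : Fin n → ℂ)
    (h2 : (A.map Complex.ofReal) *ᵥ ((A.map Complex.ofReal) *ᵥ v - (lam : ℂ) • v)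
        = (lam : ℂ) • ((A.map Complex.ofReal) *ᵥ v - (lam : ℂ) • v)) :
    (A.map Complex.ofReal) *ᵥ v = (lam : ℂ) • v := by
  set B := A.map Complex.ofReal with hB
  set w : Fin n → ℂ := B *ᵥ v - (lam : ℂ) • v with hwdef
  have hv : B *ᵥ v = (lam : ℂ) • v + w := by rw [hwdef]; abel
  have hw : B *ᵥ w = (lam : ℂ) • w := h2
  have hwz : w = 0 := by
    funext i
    by_contra hne
    have habs : 0 < ‖w i‖ := by
      simpa [norm_pos_iff] using hne
    set Cv : ℝ := (Llam i)⁻¹ * ∑ j, Llam j * ‖v j‖ with hCv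
    have hbig : ∀ k : ℕ, ((k:ℝ)+1) * ‖w i‖ ≤ lam * (Cv + ‖v i‖) := by
      intro k
      have hpowpos : 0 < lam ^ k := pow_pos hlam k
      have hBk : (B ^ (k+1)) *ᵥ v = ((lam:ℂ) ^ (k+1)) • v + (((k+1:ℕ) : ℂ) * (lam:ℂ) ^ k) • w :=
        aux_jordan_formula B _ v w hv hw k
      have hBkmap : (B ^ (k+1)) = (A ^ (k+1)).map Complex.ofReal := by
        have := map_pow (Complex.ofRealHom.mapMatrix) A (k+1)
        simp only [RingHom.mapMatrix_apply] at this; exact this.symm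
      have hbound := aux_complex_bound A hA lam Llam hpos heig v (k+1) i
      rw [← hBkmap, hBk] at hbound
      simp only [Pi.add_apply, Pi.smul_apply, smul_eq_mul] at hbound
      set a : ℂ := (lam:ℂ) ^ (k+1) * v i with ha
      set b : ℂ := (((k+1:ℕ):ℂ) * (lam:ℂ) ^ k) * w i with hbdef
      have habs_b : ‖b‖ = ((k:ℝ)+1) * lam ^ k * ‖w i‖ := by
        rw [hbdef, norm_mul, norm_mul]
        have h1 : ‖(lam:ℂ) ^ k‖ = lam ^ k := by
          rw [← Complex.ofReal_pow, Complex.norm_real, Real.norm_eq_abs, abs_of_pos hpowpos]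
        have h2 : ‖((k+1:ℕ):ℂ)‖ = (k:ℝ)+1 := by
          rw [Complex.norm_natCast]; push_cast; ring
        rw [h1, h2]
      have habs_a : ‖a‖ = lam ^ (k+1) * ‖v i‖ := by
        rw [ha, norm_mul, ← Complex.ofReal_pow, Complex.norm_real, Real.norm_eq_abs,
          abs_of_pos (pow_pos hlam (k+1))]
      have hb_le : ‖b‖ ≤ ‖a + b‖ + ‖a‖ := by
        have heq : b = (a + b) + (-a) := by ring
        calc ‖b‖ = ‖(a + b) + (-a)‖ := by rw [← heq]
          _ ≤ ‖a + b‖ + ‖-a‖ := norm_add_le _ _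
          _ = ‖a + b‖ + ‖a‖ := by rw [norm_neg]
      have key : ((k:ℝ)+1) * lam ^ k * ‖w i‖
          ≤ lam ^ (k+1) * Cv + lam ^ (k+1) * ‖v i‖ := by
        rw [← habs_b, ← habs_a]
        exact hb_le.trans (add_le_add_left hbound _)
      have key2 : (((k:ℝ)+1) * ‖w i‖) * lam ^ k
          ≤ (lam * (Cv + ‖v i‖)) * lam ^ k := by
        calc (((k:ℝ)+1) * ‖w i‖) * lam ^ k
            = ((k:ℝ)+1) * lam ^ k * ‖w i‖ := by ring
          _ ≤ lam ^ (k+1) * Cv + lam ^ (k+1) * ‖v i‖ := key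
          _ = (lam * (Cv + ‖v i‖)) * lam ^ k := by rw [pow_succ]; ring
      exact le_of_mul_le_mul_right key2 hpowpos
    obtain ⟨k, hk⟩ := exists_nat_gt ((lam * (Cv + ‖v i‖)) / ‖w i‖)
    have hbk := hbig k
    rw [div_lt_iff₀ habs] at hk
    nlinarith [hbig k]
  rw [hv, hwz]; simp

-- collapse generalized eigenvectors: (B - lam)^a v = 0 → B v = lam v
lemma aux_collapse {n : ℕ} (A : Matrix (Fin n) (Fin n) ℝ)
    (hA : ∀ i j, 0 ≤ A i j) (lam : ℝ) (hlam : 0 < lam)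
    (Llam : Fin n → ℝ) (hpos : ∀ i, 0 < Llam i)
    (heig : vecMul Llam A = lam • Llam) :
    ∀ a : ℕ, 1 ≤ a → ∀ v : Fin n → ℂ,
      ((A.map Complex.ofReal - (lam : ℂ) • 1) ^ a) *ᵥ v = 0 →
      (A.map Complex.ofReal) *ᵥ v = (lam : ℂ) • v := by
  set B := A.map Complex.ofReal with hB
  have hsub : ∀ v : Fin n → ℂ, (B - (lam : ℂ) • 1) *ᵥ v = B *ᵥ v - (lam : ℂ) • v := by
    intro v
    rw [Matrix.sub_mulVec, Matrix.smul_mulVec, Matrix.one_mulVec]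
  intro a
  induction a with
  | zero => omega
  | succ a ih =>
    intro _ v hv
    rcases Nat.eq_or_lt_of_le (Nat.one_le_iff_ne_zero.2 (Nat.succ_ne_zero a)) with h1 | h1
    · -- a + 1 = 1
      have ha0 : a = 0 := by omega
      subst ha0
      rw [pow_one, hsub] at hv
      rw [sub_eq_zero] at hv
      exact hv
    · have ha1 : 1 ≤ a := by omega
      set w := (B - (lam : ℂ) • 1) *ᵥ v with hwdef
      have hvw : ((B - (lam : ℂ) • 1) ^ a) *ᵥ w = 0 := by
        rw [hwdef, mulVec_mulVec, ← pow_succ]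
        exact hv
      have hww : B *ᵥ w = (lam : ℂ) • w := ih ha1 w hvw
      have h2 : B *ᵥ (B *ᵥ v - (lam:ℂ) • v) = (lam:ℂ) • (B *ᵥ v - (lam:ℂ) • v) := by
        rw [← hsub, ← hwdef]; exact hww
      exact aux_no_jordan A hA lam hlam Llam hpos heig v h2

-- a real eigenvector at lam orthogonal to a positive vector is zero
lemma aux_real_eig {n : ℕ} (A : Matrix (Fin n) (Fin n) ℝ)
    (hA : ∀ i j, 0 ≤ A i j) (hprim : ∃ m : ℕ, ∀ i j, 0 < (A ^ m) i j)
    (lam : ℝ) (hlam : 0 < lam)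
    (Llam : Fin n → ℝ) (hpos : ∀ i, 0 < Llam i)
    (heig : vecMul Llam A = lam • Llam)
    (p : Fin n → ℝ) (hp : A *ᵥ p = lam • p)
    (L : Fin n → ℝ) (hL : ∀ i, 0 < L i) (hLp : L ⬝ᵥ p = 0) : p = 0 := by
  obtain ⟨m, hm⟩ := hprim
  by_contra hpne
  set r : Fin n → ℝ := fun i => |p i| with hr
  -- A *ᵥ r ≥ lam • r entrywise
  have h1 : ∀ i, lam * r i ≤ (A *ᵥ r) i := by
    intro i
    have : |(A *ᵥ p) i| ≤ (A *ᵥ r) i := by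
      simp only [mulVec, dotProduct]
      calc |∑ j, A i j * p j| ≤ ∑ j, |A i j * p j| := Finset.abs_sum_le_sum_abs _ _
        _ = ∑ j, A i j * r j := by
          apply Finset.sum_congr rfl; intro j _
          rw [abs_mul, abs_of_nonneg (hA i j)]
    rw [hp] at this
    simpa [abs_mul, abs_of_pos hlam, hr] using this
  -- sum argument: A *ᵥ r = lam • r
  have h2 : Llam ⬝ᵥ (A *ᵥ r) = lam * (Llam ⬝ᵥ r) := by
    rw [Matrix.dotProduct_mulVec, heig]
    simp [smul_dotProduct]
  have h3 : ∑ i, Llam i * ((A *ᵥ r) i - lam * r i) = 0 := by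
    have : ∑ i, Llam i * ((A *ᵥ r) i - lam * r i)
        = Llam ⬝ᵥ (A *ᵥ r) - lam * (Llam ⬝ᵥ r) := by
      simp only [dotProduct, Finset.mul_sum, mul_sub]
      rw [← Finset.sum_sub_distrib]
      apply Finset.sum_congr rfl; intro i _; ring
    rw [this, h2]; ring
  have h4 : ∀ i, (A *ᵥ r) i = lam * r i := by
    have hz := (Finset.sum_eq_zero_iff_of_nonneg (fun i _ =>
      mul_nonneg (hpos i).le (sub_nonneg.2 (h1 i)))).1 h3
    intro i
    have := hz i (Finset.mem_univ i)
    have h5 : (A *ᵥ r) i - lam * r i = 0 := by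
      rcases mul_eq_zero.1 this with h | h
      · exact absurd h (hpos i).ne'
      · exact h
    linarith
  have hAr : A *ᵥ r = lam • r := by funext i; rw [h4 i]; simp
  have hAmr : (A ^ m) *ᵥ r = lam ^ m • r := aux_mulVec_pow A lam r hAr m
  have hAmp : (A ^ m) *ᵥ p = lam ^ m • p := aux_mulVec_pow A lam p hp m
  -- r is strictly positive
  obtain ⟨j0, hj0⟩ : ∃ j0, p j0 ≠ 0 := by
    by_contra h
    push_neg at h
    exact hpne (funext fun i => h i)
  haveI : Nonempty (Fin n) := ⟨j0⟩
  have hrj0 : 0 < r j0 := abs_pos.2 hj0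
  have hrpos : ∀ i, 0 < r i := by
    intro i
    have : 0 < ((A ^ m) *ᵥ r) i := by
      simp only [mulVec, dotProduct]
      have : (A ^ m) i j0 * r j0 ≤ ∑ j, (A ^ m) i j * r j :=
        Finset.single_le_sum (f := fun j => (A ^ m) i j * r j)
          (fun j _ => mul_nonneg (hm i j).le (abs_nonneg _)) (Finset.mem_univ j0)
      have h6 : 0 < (A ^ m) i j0 * r j0 := mul_pos (hm i j0) hrj0
      linarith
    rw [hAmr] at this
    simp only [Pi.smul_apply, smul_eq_mul] at this
    nlinarith [pow_pos hlam m, abs_nonneg (p i)]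
  -- sign dichotomy at j0, using equality cases
  have hsum_r : lam ^ m * r j0 = ∑ j, (A ^ m) j0 j * r j := by
    have := congrFun hAmr j0
    simp only [mulVec, dotProduct, Pi.smul_apply, smul_eq_mul] at this
    exact this.symm
  have hsum_p : lam ^ m * p j0 = ∑ j, (A ^ m) j0 j * p j := by
    have := congrFun hAmp j0
    simp only [mulVec, dotProduct, Pi.smul_apply, smul_eq_mul] at this
    exact this.symm
  rcases lt_trichotomy (p j0) 0 with hneg | hzero | hposj
  · -- then p = -r everywhere, so L ⬝ᵥ p < 0
    have hj0r : p j0 = -(r j0) := by rw [hr]; simp [abs_of_neg hneg]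
    have hsum0 : ∑ j, (A ^ m) j0 j * (r j + p j) = 0 := by
      have : ∑ j, (A ^ m) j0 j * (r j + p j)
          = (∑ j, (A ^ m) j0 j * r j) + (∑ j, (A ^ m) j0 j * p j) := by
        rw [← Finset.sum_add_distrib]
        apply Finset.sum_congr rfl; intro j _; ring
      rw [this, ← hsum_r, ← hsum_p, hj0r]; ring
    have hall : ∀ j, p j = -(r j) := by
      have hz := (Finset.sum_eq_zero_iff_of_nonneg (fun j _ =>
        mul_nonneg (hm j0 j).le (by simp only [hr]; linarith [neg_abs_le (p j)] : (0:ℝ) ≤ r j + p j))).1 hsum0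
      intro j
      have := hz j (Finset.mem_univ j)
      rcases mul_eq_zero.1 this with h | h
      · exact absurd h (hm j0 j).ne'
      · linarith
    have : L ⬝ᵥ p < 0 := by
      simp only [dotProduct]
      have : ∑ i, L i * p i = -(∑ i, L i * r i) := by
        rw [← Finset.sum_neg_distrib]
        apply Finset.sum_congr rfl; intro i _; rw [hall i]; ring
      rw [this, neg_lt, neg_zero]
      exact Finset.sum_pos (fun i _ => mul_pos (hL i) (hrpos i)) Finset.univ_nonempty
    linarith [hLp, this]
  · exact absurd hzero hj0
  · -- then p = r everywhere, so L ⬝ᵥ p > 0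
    have hj0r : p j0 = r j0 := by rw [hr]; simp [abs_of_pos hposj]
    have hsum0 : ∑ j, (A ^ m) j0 j * (r j - p j) = 0 := by
      have : ∑ j, (A ^ m) j0 j * (r j - p j)
          = (∑ j, (A ^ m) j0 j * r j) - (∑ j, (A ^ m) j0 j * p j) := by
        rw [← Finset.sum_sub_distrib]
        apply Finset.sum_congr rfl; intro j _; ring
      rw [this, ← hsum_r, ← hsum_p, hj0r]; ring
    have hall : ∀ j, p j = r j := by
      have hz := (Finset.sum_eq_zero_iff_of_nonneg (fun j _ =>
        mul_nonneg (hm j0 j).le (by simp only [hr]; linarith [le_abs_self (p j)] : (0:ℝ) ≤ r j - p j))).1 hsum0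
      intro j
      have := hz j (Finset.mem_univ j)
      rcases mul_eq_zero.1 this with h | h
      · exact absurd h (hm j0 j).ne'
      · linarith
    have : 0 < L ⬝ᵥ p := by
      simp only [dotProduct]
      have heq : ∑ i, L i * p i = ∑ i, L i * r i := by
        apply Finset.sum_congr rfl; intro i _; rw [hall i]
      rw [heq]
      exact Finset.sum_pos (fun i _ => mul_pos (hL i) (hrpos i)) Finset.univ_nonempty
    linarith [hLp, this]

-- F1: aeval matrix dotted with L vanishes when all power-dots vanish
lemma aux_poly_dot_zero {n : ℕ} (B : Matrix (Fin n) (Fin n) ℂ) (L x : Fin n → ℂ)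
    (h : ∀ k : ℕ, L ⬝ᵥ ((B ^ k) *ᵥ x) = 0) (q : ℂ[X]) :
    L ⬝ᵥ ((Polynomial.aeval B q) *ᵥ x) = 0 := by
  induction q using Polynomial.induction_on' with
  | add p q hp hq =>
    rw [map_add, Matrix.add_mulVec, dotProduct_add, hp, hq, add_zero]
  | monomial k c =>
    rw [Polynomial.aeval_monomial]
    have : ((algebraMap ℂ (Matrix (Fin n) (Fin n) ℂ)) c * B ^ k) *ᵥ x
        = c • ((B ^ k) *ᵥ x) := by
      rw [Algebra.algebraMap_eq_smul_one, Matrix.smul_mul, one_mul,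
        Matrix.smul_mulVec]
    rw [this, dotProduct_smul, h k, smul_zero]

-- F2: dotting a left eigenvector through aeval
lemma aux_poly_dot_eig {n : ℕ} (B : Matrix (Fin n) (Fin n) ℂ) (lamc : ℂ) (L z : Fin n → ℂ)
    (heig : vecMul L B = lamc • L) (q : ℂ[X]) :
    L ⬝ᵥ ((Polynomial.aeval B q) *ᵥ z) = q.eval lamc * (L ⬝ᵥ z) := by
  induction q using Polynomial.induction_on' with
  | add p q hp hq =>
    rw [map_add, Matrix.add_mulVec, dotProduct_add, hp, hq, Polynomial.eval_add, add_mul]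
  | monomial k c =>
    rw [Polynomial.aeval_monomial, Polynomial.eval_monomial]
    have h1 : ((algebraMap ℂ (Matrix (Fin n) (Fin n) ℂ)) c * B ^ k) *ᵥ z
        = c • ((B ^ k) *ᵥ z) := by
      rw [Algebra.algebraMap_eq_smul_one, Matrix.smul_mul, one_mul,
        Matrix.smul_mulVec]
    rw [h1, dotProduct_smul, Matrix.dotProduct_mulVec, aux_vecMul_pow B lamc L heig k]
    rw [smul_dotProduct]
    simp [smul_eq_mul]; ring

-- F3: aeval on an eigenvector
lemma aux_poly_eigvec {n : ℕ} (B : Matrix (Fin n) (Fin n) ℂ) (lamc : ℂ) (y : Fin n → ℂ)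
    (hy : B *ᵥ y = lamc • y) (q : ℂ[X]) :
    (Polynomial.aeval B q) *ᵥ y = q.eval lamc • y := by
  induction q using Polynomial.induction_on' with
  | add p q hp hq =>
    rw [map_add, Matrix.add_mulVec, hp, hq, Polynomial.eval_add, add_smul]
  | monomial k c =>
    rw [Polynomial.aeval_monomial, Polynomial.eval_monomial]
    have h1 : ((algebraMap ℂ (Matrix (Fin n) (Fin n) ℂ)) c * B ^ k) *ᵥ y
        = c • ((B ^ k) *ᵥ y) := by
      rw [Algebra.algebraMap_eq_smul_one, Matrix.smul_mul, one_mul,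
        Matrix.smul_mulVec]
    rw [h1, aux_mulVec_pow B lamc y hy k, smul_smul]

lemma aux_charpoly_eval {n : ℕ} (M : Matrix (Fin n) (Fin n) ℂ) (x : ℂ) :
    M.charpoly.eval x = (x • (1 : Matrix (Fin n) (Fin n) ℂ) - M).det := by
  rw [Matrix.charpoly, _root_.eval_det, matPolyEquiv_charmatrix]
  simp [Matrix.scalar, smul_eq_diagonal_mul]
  rfl


def popR {n : ℕ} (w : List (Fin n)) : Fin n → ℝ := fun i => (w.count i : ℝ)

def transMatR {n : ℕ} (φ : Fin n → List (Fin n)) : Matrix (Fin n) (Fin n) ℝ :=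
  Matrix.of fun i j => ((φ j).count i : ℝ)

/-- For a primitive substitution with PF eigenvalue `λ` and positive left PF eigenvector
`L_λ`: if `u ∼_L v` for a positive length vector `L`, then `p(u) − p(v)` is orthogonal to
`L_λ` (equivalently, lies in the sum of the generalized eigenspaces for the other
eigenvalues); conversely, for `L = L_λ`, orthogonality to `L_λ` implies `u ∼_{L_λ} v`. -/
theorem simL_orthogonal_Llambda {n : ℕ} (φ : Fin n → List (Fin n))
    (A : Matrix (Fin n) (Fin n) ℝ) (hA : A = transMatR φ)
    (hprim : ∃ m : ℕ, ∀ i j, 0 < (A ^ m) i j)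
    (lam : ℝ) (hlam : 0 < lam)
    (Llam : Fin n → ℝ) (hpos : ∀ i, 0 < Llam i)
    (heig : Matrix.vecMul Llam A = lam • Llam)
    (hdom : ∀ μ ∈ spectrum ℂ (A.map Complex.ofReal), μ ≠ (lam : ℂ) → ‖μ‖ < lam)
    (u v : List (Fin n)) :
    ((∀ L : Fin n → ℝ, (∀ i, 0 < L i) →
        (∀ k : ℕ, L ⬝ᵥ (A ^ k).mulVec (popR u - popR v) = 0) →
        Llam ⬝ᵥ (popR u - popR v) = 0) ∧
      (Llam ⬝ᵥ (popR u - popR v) = 0 →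
        ∀ k : ℕ, Llam ⬝ᵥ (A ^ k).mulVec (popR u - popR v) = 0)) := by
  have hAnn : ∀ i j, 0 ≤ A i j := by
    rw [hA]; intro i j; simp [transMatR]
  set x : Fin n → ℝ := popR u - popR v with hx
  constructor
  · -- forward direction
    intro L hL h
    rcases Nat.eq_zero_or_pos n with hn | hn
    · subst hn; simp [dotProduct]
    set B : Matrix (Fin n) (Fin n) ℂ := A.map Complex.ofReal with hB
    set lamc : ℂ := (lam : ℂ) with hlamc
    set Lc : Fin n → ℂ := fun i => (L i : ℂ) with hLc
    set Llamc : Fin n → ℂ := fun i => (Llam i : ℂ) with hLlamc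
    set xc : Fin n → ℂ := fun i => (x i : ℂ) with hxc
    have hBkmap : ∀ k : ℕ, (B ^ k) = (A ^ k).map Complex.ofReal := by
      intro k
      have := map_pow (Complex.ofRealHom.mapMatrix) A k
      simp only [RingHom.mapMatrix_apply] at this; exact this.symm
    have hdotcast : ∀ (w : Fin n → ℝ) (y : Fin n → ℝ),
        (fun i => ((w i : ℂ))) ⬝ᵥ (fun i => ((y i : ℂ))) = ((w ⬝ᵥ y : ℝ) : ℂ) := by
      intro w y
      simp only [dotProduct]
      push_cast
      rfl
    have hC : ∀ k : ℕ, Lc ⬝ᵥ ((B ^ k) *ᵥ xc) = 0 := by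
      intro k
      have : (B ^ k) *ᵥ xc = fun i => (((A ^ k) *ᵥ x) i : ℂ) := by
        funext i
        rw [hBkmap k]
        simp only [mulVec, dotProduct, Matrix.map_apply, hxc]
        push_cast
        rfl
      rw [this, hLc, hdotcast L fun i => ((A ^ k) *ᵥ x) i]
      rw [show (fun i => ((A ^ k) *ᵥ x) i) = (A ^ k) *ᵥ x from rfl]
      rw [h k]
      simp
    have heigC : vecMul Llamc B = lamc • Llamc := by
      funext j
      have := congrFun heig j
      simp only [vecMul, dotProduct, Pi.smul_apply, smul_eq_mul] at this ⊢
      simp only [hB, hLlamc, hlamc, Matrix.map_apply]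
      rw [← Complex.ofReal_mul, ← this]
      push_cast
      rfl
    -- characteristic polynomial factorization
    set P : ℂ[X] := B.charpoly with hP
    have hP0 : P ≠ 0 := (Matrix.charpoly_monic B).ne_zero
    have hLlamc0 : Llamc ≠ 0 := by
      intro hcontra
      have := congrFun hcontra ⟨0, hn⟩
      simp only [hLlamc, Pi.zero_apply, Complex.ofReal_eq_zero] at this
      exact (hpos ⟨0, hn⟩).ne' this
    have hroot : P.IsRoot lamc := by
      have hker : vecMul Llamc (lamc • (1 : Matrix (Fin n) (Fin n) ℂ) - B) = 0 := by
        rw [Matrix.vecMul_sub, heigC]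
        funext j
        simp only [vecMul, dotProduct, Pi.smul_apply, Matrix.smul_apply, Matrix.one_apply,
          smul_eq_mul, mul_ite, mul_one, mul_zero, Pi.sub_apply, Pi.zero_apply]
        rw [Finset.sum_ite_eq' Finset.univ j (fun i => Llamc i * lamc)]
        simp [mul_comm]
      have hdet : (lamc • (1 : Matrix (Fin n) (Fin n) ℂ) - B).det = 0 := by
        rw [← Matrix.exists_vecMul_eq_zero_iff]
        exact ⟨Llamc, hLlamc0, hker⟩
      rw [Polynomial.IsRoot, hP, aux_charpoly_eval, hdet]
    set a : ℕ := P.rootMultiplicity lamc with haa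
    have ha : 1 ≤ a := (Polynomial.rootMultiplicity_pos hP0).2 hroot
    obtain ⟨q, hfac, hndvd⟩ := P.exists_eq_pow_rootMultiplicity_mul_and_not_dvd hP0 lamc
    have hqlam : q.eval lamc ≠ 0 := fun hcontra =>
      hndvd (Polynomial.dvd_iff_isRoot.2 hcontra)
    -- Cayley-Hamilton
    have hCH : ((B - lamc • 1) ^ a) * (Polynomial.aeval B q) = 0 := by
      have h1 : Polynomial.aeval B P = 0 := Matrix.aeval_self_charpoly B
      rw [hfac] at h1
      rw [_root_.map_mul, map_pow] at h1
      have h2 : Polynomial.aeval B (X - C lamc) = B - lamc • 1 := by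
        simp [Algebra.algebraMap_eq_smul_one]
      rw [h2] at h1
      exact h1
    set y' : Fin n → ℂ := (Polynomial.aeval B q) *ᵥ xc with hy'
    have hgen : ((B - lamc • 1) ^ a) *ᵥ y' = 0 := by
      rw [hy', mulVec_mulVec, hCH, Matrix.zero_mulVec]
    have hy'eig : B *ᵥ y' = lamc • y' :=
      aux_collapse A hAnn lam hlam Llam hpos heig a ha y' hgen
    have hLy' : Lc ⬝ᵥ y' = 0 := aux_poly_dot_zero B Lc xc hC q
    set y : Fin n → ℂ := (q.eval lamc)⁻¹ • y' with hy
    have hyeig : B *ᵥ y = lamc • y := by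
      rw [hy, mulVec_smul, hy'eig, smul_comm]
    have hLy : Lc ⬝ᵥ y = 0 := by
      rw [hy, dotProduct_smul, hLy', smul_zero]
    set z : Fin n → ℂ := xc - y with hz
    have hqz : (Polynomial.aeval B q) *ᵥ z = 0 := by
      rw [hz, Matrix.mulVec_sub, ← hy', aux_poly_eigvec B lamc y hyeig q, hy,
        smul_smul, mul_inv_cancel₀ hqlam, one_smul, sub_self]
    have hLlamz : Llamc ⬝ᵥ z = 0 := by
      have := aux_poly_dot_eig B lamc Llamc z heigC q
      rw [hqz] at this
      simp only [dotProduct_zero] at this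
      rcases mul_eq_zero.1 this.symm with h | h
      · exact absurd h hqlam
      · exact h
    -- real and imaginary parts of y are real eigenvectors
    have hre : A *ᵥ (fun i => (y i).re) = lam • (fun i => (y i).re) := by
      funext i
      have h1 := congrFun hyeig i
      simp only [mulVec, dotProduct, Pi.smul_apply, smul_eq_mul, hB, Matrix.map_apply] at h1
      have h2 := congrArg Complex.re h1
      simp only [Complex.re_sum, Complex.mul_re, Complex.ofReal_re, Complex.ofReal_im,
        zero_mul, sub_zero, hlamc] at h2
      simpa [mulVec, dotProduct] using h2
    have him : A *ᵥ (fun i => (y i).im) = lam • (fun i => (y i).im) := by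
      funext i
      have h1 := congrFun hyeig i
      simp only [mulVec, dotProduct, Pi.smul_apply, smul_eq_mul, hB, Matrix.map_apply] at h1
      have h2 := congrArg Complex.im h1
      simp only [Complex.im_sum, Complex.mul_im, Complex.ofReal_re, Complex.ofReal_im,
        zero_mul, add_zero, hlamc] at h2
      simpa [mulVec, dotProduct] using h2
    have hLre : L ⬝ᵥ (fun i => (y i).re) = 0 := by
      have h2 := congrArg Complex.re hLy
      simp only [dotProduct, Complex.re_sum, Complex.mul_re, hLc, Complex.ofReal_re,
        Complex.ofReal_im, zero_mul, sub_zero, Complex.zero_re] at h2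
      simpa [dotProduct] using h2
    have hLim : L ⬝ᵥ (fun i => (y i).im) = 0 := by
      have h2 := congrArg Complex.im hLy
      simp only [dotProduct, Complex.im_sum, Complex.mul_im, hLc, Complex.ofReal_re,
        Complex.ofReal_im, zero_mul, add_zero, Complex.zero_im] at h2
      simpa [dotProduct] using h2
    have hyre0 : (fun i => (y i).re) = 0 :=
      aux_real_eig A hAnn hprim lam hlam Llam hpos heig _ hre L hL hLre
    have hyim0 : (fun i => (y i).im) = 0 :=
      aux_real_eig A hAnn hprim lam hlam Llam hpos heig _ him L hL hLim
    have hy0 : y = 0 := by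
      funext i
      have h1 := congrFun hyre0 i
      have h2 := congrFun hyim0 i
      simp only [Pi.zero_apply] at h1 h2
      exact Complex.ext h1 h2
    have hLlamxc : Llamc ⬝ᵥ xc = 0 := by
      have : xc = y + z := by rw [hz]; abel
      rw [this, dotProduct_add, hy0, dotProduct_zero, zero_add, hLlamz]
    rw [hLlamc, hxc, hdotcast Llam x] at hLlamxc
    exact_mod_cast hLlamxc
  · -- converse direction
    intro h0 k
    rw [Matrix.dotProduct_mulVec, aux_vecMul_pow A lam Llam heig k,
      smul_dotProduct, h0, smul_zero]
end

section
/- For the substitution φ on {1,2} given by φ(1) = 112 and φ(2) = 12, the set I = { (1,1), (12,21), (2,2) } of pairs of words is closed under applying φ to both coordinates and splitting the result into irreducible balanced pairs; specifically, φ applied to (1,1) reduces to (1,1)(2,2), and φ applied to (12,21) reduces to (1,1)(12,21)(1,1)(2,2). Hence the balanced pair algorithm terminates for this substitution. -/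
def subApply {n : ℕ} (φ : Fin n → List (Fin n)) (w : List (Fin n)) : List (Fin n) :=
  w.flatMap φ

/-- A pair of words is balanced if they have the same population vector. -/
def BalancedPair {n : ℕ} (u v : List (Fin n)) : Prop := ∀ i, u.count i = v.count i

/-- A balanced pair is irreducible if it admits no proper splitting into balanced pairs. -/
def IrredBP {n : ℕ} (u v : List (Fin n)) : Prop :=
  BalancedPair u v ∧ u ≠ [] ∧
    ∀ k, 0 < k → k < u.length → ¬ BalancedPair (u.take k) (v.take k)

/-- `ps` is a reduction of the balanced pair `(u, v)` into irreducible balanced pairs. -/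
def Reduction {n : ℕ} (u v : List (Fin n)) (ps : List (List (Fin n) × List (Fin n))) : Prop :=
  (∀ p ∈ ps, IrredBP p.1 p.2) ∧ (ps.map Prod.fst).flatten = u ∧ (ps.map Prod.snd).flatten = v

section BalancedPairs

variable {n : ℕ}

theorem IrredBP.singleton (a : Fin n) : IrredBP [a] [a] :=
  ⟨fun _ => rfl, List.cons_ne_nil a [], fun k hk hk' => by simp at hk'; omega⟩

theorem IrredBP.pair_swap {a b : Fin n} (hab : a ≠ b) : IrredBP [a, b] [b, a] := by
  refine ⟨fun i => ?_, List.cons_ne_nil _ _, fun k hk hk' hbal => ?_⟩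
  · simp only [List.count_cons, List.count_nil]
    omega
  · obtain rfl : k = 1 := by simp at hk'; omega
    exact hab.symm (by simpa [List.count_cons, hab] using hbal a)

theorem Reduction.nil : Reduction ([] : List (Fin n)) [] [] :=
  ⟨fun _ h => absurd h List.not_mem_nil, rfl, rfl⟩

theorem Reduction.cons {u v u' v' : List (Fin n)} {ps : List (List (Fin n) × List (Fin n))}
    (huv : IrredBP u v) (h : Reduction u' v' ps) : Reduction (u ++ u') (v ++ v') ((u, v) :: ps) :=
  ⟨by simpa [huv] using h.1, by simp [h.2.1], by simp [h.2.2]⟩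

theorem reduction_diagonal (w : List (Fin n)) :
    Reduction w w (w.map fun a => ([a], [a])) := by
  induction w with
  | nil => exact Reduction.nil
  | cons a w ih => exact .cons (IrredBP.singleton a) ih

end BalancedPairs

/-- For `φ(1) = 112`, `φ(2) = 12` (letters `0`,`1` standing for `1`,`2`), the set
`I = {(1,1), (12,21), (2,2)}` is closed under applying `φ` and splitting into irreducible
balanced pairs; in particular `φ` of `(1,1)` reduces to pairs among `{(1,1),(2,2)}` and
`φ` of `(12,21)` reduces to pairs among `{(1,1),(12,21),(2,2)}`. Hence the balanced pair
algorithm terminates for this substitution. -/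
theorem bpa_terminates_example (φ : Fin 2 → List (Fin 2))
    (hφ0 : φ 0 = [0, 0, 1]) (hφ1 : φ 1 = [0, 1]) :
    (∀ pr ∈ ([([0], [0]), ([0, 1], [1, 0]), ([1], [1])] :
        List (List (Fin 2) × List (Fin 2))),
      ∃ ps, Reduction (subApply φ pr.1) (subApply φ pr.2) ps ∧
        ∀ q ∈ ps, q ∈ ([([0], [0]), ([0, 1], [1, 0]), ([1], [1])] :
          List (List (Fin 2) × List (Fin 2)))) ∧
    (∃ ps, Reduction (subApply φ [0]) (subApply φ [0]) ps ∧
      ∀ q ∈ ps, q = ([0], [0]) ∨ q = ([1], [1])) ∧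
    (∃ ps, Reduction (subApply φ [0, 1]) (subApply φ [1, 0]) ps ∧
      ∀ q ∈ ps, q = ([0], [0]) ∨ q = ([0, 1], [1, 0]) ∨ q = ([1], [1])) := by
  have red0 : Reduction (subApply φ [0]) (subApply φ [0])
      [([0], [0]), ([0], [0]), ([1], [1])] := by
    simpa [subApply, hφ0] using reduction_diagonal (φ 0)
  have red1 : Reduction (subApply φ [1]) (subApply φ [1]) [([0], [0]), ([1], [1])] := by
    simpa [subApply, hφ1] using reduction_diagonal (φ 1)
  -- φ(12) = 1 12 12 and φ(21) = 1 21 12: peel off (1,1) and (12,21), leaving (12,12).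
  have red01 : Reduction (subApply φ [0, 1]) (subApply φ [1, 0])
      [([0], [0]), ([0, 1], [1, 0]), ([0], [0]), ([1], [1])] := by
    simpa [subApply, hφ0, hφ1] using
      .cons (IrredBP.singleton 0)
        (.cons (IrredBP.pair_swap (by decide)) (reduction_diagonal [0, 1]))
  refine ⟨fun pr hpr => ?_, ⟨_, red0, by decide⟩, ⟨_, red01, by decide⟩⟩
  simp only [List.mem_cons, List.not_mem_nil, or_false] at hpr
  rcases hpr with rfl | rfl | rfl
  · exact ⟨_, red0, by decide⟩
  · exact ⟨_, red01, by decide⟩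
  · exact ⟨_, red1, by decide⟩
end
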